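/- Let I be a countable family of nondegenerate closed intervals in ℝ and define x ~ y as: for every ε > 0 there is a finite ε-chain of intervals from I connecting x to y (each consecutive separation at most ε). Then every equivalence class of ~ is a convex subset of ℝ (i.e., an interval, possibly degenerate). -/

import Mathlib

/-!
If `y ≤ w ≤ z` with `y` and `z` in the class of `x`, then `w` lies between `x` and one of `y`,
`z`, say `u`. The links of an `ε/2`-chain from `x` to `u` are nonempty and order-connected, so
one of them comes within `ε/2` of `w`: either `w` lies in a link, or it falls in the gap between
two consecutive links, whose separation is at most `ε/2`. Cutting the chain at that link and
jumping to `w` gives an `ε`-chain from `x` to `w`.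
-/

/-- The separation distance between two subsets of `ℝ`. -/
noncomputable def sep (A B : Set ℝ) : ℝ :=
  sInf {d : ℝ | ∃ a ∈ A, ∃ b ∈ B, d = |a - b|}

/-- A nondegenerate closed interval (possibly a half-line or all of `ℝ`). -/
def IsNondegClosedInterval (J : Set ℝ) : Prop :=
  IsClosed J ∧ J.OrdConnected ∧ ∃ a ∈ J, ∃ b ∈ J, a < b

/-- `x` and `y` are related iff for every `ε > 0` there is a finite `ε`-chain of
intervals from `I` connecting `x` to `y`. -/
def chainRel (I : Set (Set ℝ)) (x y : ℝ) : Prop :=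
  ∀ ε > (0 : ℝ), ∃ L : List (Set ℝ), (∀ J ∈ L, J ∈ I) ∧
    List.Chain' (fun A B => sep A B ≤ ε) ({x} :: (L ++ [{y}]))

open Set Metric

section Sep

variable {A B : Set ℝ}

lemma sep_le_abs_sub {a b : ℝ} (ha : a ∈ A) (hb : b ∈ B) : sep A B ≤ |a - b| :=
  csInf_le ⟨0, by rintro d ⟨a, -, b, -, rfl⟩; positivity⟩ ⟨a, ha, b, hb, rfl⟩

lemma le_sep {c : ℝ} (hA : A.Nonempty) (hB : B.Nonempty)
    (h : ∀ a ∈ A, ∀ b ∈ B, c ≤ |a - b|) : c ≤ sep A B := by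
  obtain ⟨a, ha⟩ := hA
  obtain ⟨b, hb⟩ := hB
  exact le_csInf ⟨_, a, ha, b, hb, rfl⟩ (by rintro d ⟨a, ha, b, hb, rfl⟩; exact h a ha b hb)

lemma sep_comm (A B : Set ℝ) : sep A B = sep B A := by
  unfold sep
  congr 1
  ext d
  constructor <;> rintro ⟨a, ha, b, hb, rfl⟩ <;> exact ⟨b, hb, a, ha, abs_sub_comm _ _⟩

-- Both sides are `0` when `A = ∅`, since `sInf ∅ = 0` in `ℝ`.
lemma sep_singleton_right (A : Set ℝ) (w : ℝ) : sep A {w} = infDist w A := by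
  rw [infDist_eq_iInf]
  show sInf _ = sInf (range _)
  congr 1
  ext d
  simp [Real.dist_eq, abs_sub_comm, eq_comm]

lemma sep_singleton_le_sep_singleton_add (A : Set ℝ) (y w : ℝ) :
    sep A {w} ≤ sep A {y} + |y - w| := by
  simpa [sep_singleton_right, Real.dist_eq, abs_sub_comm] using
    infDist_le_infDist_add_dist (x := w) (y := y) (s := A)

lemma sep_singleton_le_sep_of_lt_of_lt {w : ℝ} (hA : A.Nonempty) (hB : B.Nonempty)
    (hAw : ∀ a ∈ A, a < w) (hwB : ∀ b ∈ B, w < b) : sep A {w} ≤ sep A B :=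
  le_sep hA hB fun a ha b hb =>
    calc sep A {w} ≤ |a - w| := sep_le_abs_sub ha rfl
      _ ≤ |a - b| := by
        rw [abs_of_neg (sub_neg.2 (hAw a ha)), abs_of_neg (by linarith [hAw a ha, hwB b hb])]
        linarith [hwB b hb]

end Sep

section Chain

variable {δ w : ℝ}

theorem exists_sep_singleton_le_of_isChain_of_le_of_le (hδ : 0 ≤ δ) {l : List (Set ℝ)}
    (hl : ∀ S ∈ l, S.Nonempty ∧ S.OrdConnected)
    (hchain : l.IsChain (fun A B => sep A B ≤ δ)) {A B : Set ℝ} {a b : ℝ}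
    (hA : A ∈ l.head?) (ha : a ∈ A) (hB : B ∈ l.getLast?) (hb : b ∈ B)
    (haw : a ≤ w) (hwb : w ≤ b) :
    ∃ S ∈ l, sep S {w} ≤ δ := by
  induction l generalizing A a with
  | nil => simp at hA
  | cons C l ih =>
    obtain rfl : A = C := by simpa [eq_comm] using hA
    by_cases hwA : w ∈ A
    · exact ⟨A, by simp, by rw [sep_singleton_right, infDist_zero_of_mem hwA]; exact hδ⟩
    have hAw : ∀ a' ∈ A, a' < w := fun a' ha' =>
      lt_of_not_ge fun h => hwA ((hl A (by simp)).2.out ha ha' ⟨haw, h⟩)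
    cases l with
    | nil =>
      obtain rfl : A = B := by simpa using hB
      exact absurd (hAw b hb) (not_lt.2 hwb)
    | cons D l =>
      obtain ⟨hAD, hchain⟩ := List.isChain_cons_cons.1 hchain
      by_cases hD : ∃ d ∈ D, d ≤ w
      · obtain ⟨d, hd, hdw⟩ := hD
        obtain ⟨S, hS, hSw⟩ := ih (fun S hS => hl S (List.mem_cons_of_mem _ hS)) hchain
          (by simp) hd (by simpa using hB) hdw
        exact ⟨S, List.mem_cons_of_mem _ hS, hSw⟩
      · push Not at hD
        exact ⟨A, by simp,
          (sep_singleton_le_sep_of_lt_of_lt ⟨a, ha⟩ (hl D (by simp)).1 hAw hD).trans hAD⟩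

theorem exists_sep_singleton_le_of_isChain_of_mem_uIcc (hδ : 0 ≤ δ) {l : List (Set ℝ)}
    (hl : ∀ S ∈ l, S.Nonempty ∧ S.OrdConnected)
    (hchain : l.IsChain (fun A B => sep A B ≤ δ)) {A B : Set ℝ} {a b : ℝ}
    (hA : A ∈ l.head?) (ha : a ∈ A) (hB : B ∈ l.getLast?) (hb : b ∈ B)
    (hw : w ∈ uIcc a b) :
    ∃ S ∈ l, sep S {w} ≤ δ := by
  rcases le_total a b with hab | hba
  · rw [uIcc_of_le hab] at hw
    exact exists_sep_singleton_le_of_isChain_of_le_of_le hδ hl hchain hA ha hB hb hw.1 hw.2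
  · rw [uIcc_of_ge hba] at hw
    have hchain' : l.reverse.IsChain (fun A B => sep A B ≤ δ) :=
      List.isChain_reverse.2 (hchain.imp fun A B h => by rwa [sep_comm])
    obtain ⟨S, hS, hSw⟩ := exists_sep_singleton_le_of_isChain_of_le_of_le hδ
      (by simpa using hl) hchain' (by simpa using hB) hb (by simpa using hA) ha hw.1 hw.2
    exact ⟨S, List.mem_reverse.1 hS, hSw⟩

theorem exists_isChain_of_sep_singleton_le {y : ℝ} (hδ : 0 ≤ δ) {A S : Set ℝ}
    {L : List (Set ℝ)} (hchain : (A :: (L ++ [{y}])).IsChain (fun A B => sep A B ≤ δ))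
    (hS : S ∈ A :: (L ++ [{y}])) (hSw : sep S {w} ≤ δ) :
    ∃ L' ⊆ L, (A :: (L' ++ [{w}])).IsChain (fun A B => sep A B ≤ δ + δ) := by
  induction L generalizing A with
  | nil =>
    refine ⟨[], List.nil_subset _, List.isChain_pair.2 ?_⟩
    have hAy : sep A {y} ≤ δ := by simpa using hchain
    rcases List.mem_pair.1 hS with rfl | rfl
    · linarith
    -- `{y}` is not a link, so jump to `w` from the link before it instead.
    · rw [sep_singleton_right, infDist_singleton, Real.dist_eq] at hSw
      linarith [sep_singleton_le_sep_singleton_add A y w, abs_sub_comm y w]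
  | cons B L ih =>
    obtain ⟨hAB, hchain⟩ := List.isChain_cons_cons.1 hchain
    rcases List.mem_cons.1 hS with rfl | hS
    · exact ⟨[], List.nil_subset _, List.isChain_pair.2 (by linarith)⟩
    · obtain ⟨L', hL', hchain'⟩ := ih hchain hS
      exact ⟨B :: L', List.cons_subset_cons _ hL',
        List.isChain_cons_cons.2 ⟨by linarith, hchain'⟩⟩

end Chain

theorem chainRel_of_mem_uIcc {I : Set (Set ℝ)} (hI : ∀ J ∈ I, J.Nonempty ∧ J.OrdConnected)
    {x u w : ℝ} (hxu : chainRel I x u) (hw : w ∈ uIcc x u) : chainRel I x w := by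
  intro ε hε
  have hε2 : 0 ≤ ε / 2 := by positivity
  obtain ⟨L, hLI, hchain⟩ := hxu (ε / 2) (by positivity)
  have hl : ∀ S ∈ {x} :: (L ++ [{u}]), S.Nonempty ∧ S.OrdConnected := by
    intro S hS
    simp only [List.mem_cons, List.mem_append, List.not_mem_nil, or_false] at hS
    rcases hS with rfl | hS | rfl
    · exact ⟨singleton_nonempty x, ordConnected_singleton⟩
    · exact hI S (hLI S hS)
    · exact ⟨singleton_nonempty u, ordConnected_singleton⟩
  obtain ⟨S, hS, hSw⟩ := exists_sep_singleton_le_of_isChain_of_mem_uIcc hε2 hl hchain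
    (A := {x}) (B := {u}) (by simp) (mem_singleton x)
    (by rw [← List.cons_append, List.getLast?_concat]; rfl) (mem_singleton u) hw
  obtain ⟨L', hL', hchain'⟩ := exists_isChain_of_sep_singleton_le hε2 hchain hS hSw
  exact ⟨L', fun J hJ => hLI J (hL' hJ), by rwa [add_halves] at hchain'⟩

theorem IsNondegClosedInterval.nonempty_ordConnected {J : Set ℝ}
    (hJ : IsNondegClosedInterval J) : J.Nonempty ∧ J.OrdConnected :=
  let ⟨_, hoc, a, ha, _⟩ := hJ
  ⟨⟨a, ha⟩, hoc⟩

theorem stmt_4_general (I : Set (Set ℝ))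
    (hI : ∀ J ∈ I, IsNondegClosedInterval J) :
    ∀ x : ℝ, Convex ℝ {y : ℝ | chainRel I x y} := by
  intro x
  have hI' : ∀ J ∈ I, J.Nonempty ∧ J.OrdConnected := fun J hJ =>
    (hI J hJ).nonempty_ordConnected
  refine convex_iff_ordConnected.2 ⟨fun y hy z hz w hw => ?_⟩
  rcases le_total w x with hwx | hxw
  · exact chainRel_of_mem_uIcc hI' hy (mem_uIcc.2 (Or.inr ⟨hw.1, hwx⟩))
  · exact chainRel_of_mem_uIcc hI' hz (mem_uIcc.2 (Or.inl ⟨hxw, hw.2⟩))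

/-- Every equivalence class of the chain relation is a convex subset of `ℝ`. -/
theorem stmt_4 (I : Set (Set ℝ)) (hcount : I.Countable)
    (hI : ∀ J ∈ I, IsNondegClosedInterval J) :
    ∀ x : ℝ, Convex ℝ {y : ℝ | chainRel I x y} :=
  stmt_4_general I hI
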